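/- There is an absolute constant c > 0 such that the following holds. Let p > 3 be a prime and let a1, a2, a3 be integers satisfying P1(a1,a2,a3) ≡ −1, P2(a1,a2,a3) ≡ 3, P3(a1,a2,a3) ≡ −1, and P4(a1,a2,a3) ≡ −1 (mod p). Then for all L sufficiently large in terms of p, there exists Λ ⊆ {0, 1, …, L − 1} with |Λ| ≥ L^(1 − c/√(log p)) such that the only quadruples (w, x, y, z) ∈ Λ⁴ satisfying P1(a1,a2,a3)·w + P2(a1,a2,a3)·x + P3(a1,a2,a3)·y + P4(a1,a2,a3)·z = 0 are those with w = x = y = z. -/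

import Mathlib

/-!
Behrend's construction gives a set `T ⊆ [0, p/6)` of size `p · exp(-O(√log p))` in which
`w + y + z = 3x` has only trivial solutions: the integer points of a sphere, read as base-`3d`
numbers, since a sphere is strictly convex and the addition produces no carries. Modulo `p` the
coefficients `P₁(a), …, P₄(a)` are `-1, 3, -1, -1`, and `T` is so small that a solution modulo `p`
in `T` is a solution of `-w + 3x - y - z = 0`, hence trivial. Then the numbers all of whose base-`p`
digits lie in `T` admit only trivial solutions of `∑ Pᵢ(a) wᵢ = 0`: the lowest digits solve the
congruence, so they agree and, as `∑ Pᵢ = 0`, cancel, leaving the same equation for the remaining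
digits. Below `p ^ k` there are `|T| ^ k ≥ p ^ (k (1 - c / √log p))` such numbers.
-/

def P1 (x y z : ℤ) : ℤ := (x - y) * (y - z) * (z - x)
def P2 (x y z : ℤ) : ℤ := y * z * (y - z)
def P3 (x y z : ℤ) : ℤ := z * x * (z - x)
def P4 (x y z : ℤ) : ℤ := x * y * (x - y)

open Finset Real

/-- For `q = 0` the divisibility `0 ∣ ·` says `· = 0`: the equation over `ℤ`. -/
def OnlyTrivialSolutions (q : ℕ) (A B C D : ℤ) (T : Finset ℕ) : Prop :=
  ∀ w ∈ T, ∀ x ∈ T, ∀ y ∈ T, ∀ z ∈ T,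
    (q : ℤ) ∣ A * w + B * x + C * y + D * z → w = x ∧ x = y ∧ y = z

namespace Behrend

theorem map_lt_pow {n d : ℕ} {a : Fin n → ℕ} (ha : ∀ i, a i < d) : map d a < d ^ n := by
  induction n with
  | zero => simp
  | succ n ih =>
    have h0 := ha 0
    have hrest : map d (a ∘ Fin.succ) + 1 ≤ d ^ n := ih fun i => ha i.succ
    rw [map_succ', pow_succ]
    nlinarith

theorem eq_of_mem_sphere_of_add_add_eq {n d k : ℕ} {a f c e : Fin n → ℕ}
    (ha : a ∈ sphere n d k) (hf : f ∈ sphere n d k) (hc : c ∈ sphere n d k)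
    (he : e ∈ sphere n d k) (h : a + c + e = 3 • f) : a = f ∧ c = f ∧ e = f := by
  have hsq : ∀ v ∈ sphere n d k, ∑ i, (v i : ℤ) ^ 2 = k := fun v hv => by
    exact_mod_cast (mem_filter.1 hv).2
  -- `(a - f)² + (c - f)² + (e - f)² = a² + c² + e² - 3 f²` coordinatewise, as `a + c + e = 3 f`
  have hzero :
      ∑ i, (((a i : ℤ) - f i) ^ 2 + ((c i : ℤ) - f i) ^ 2 + ((e i : ℤ) - f i) ^ 2) = 0 := by
    have hi : ∀ i, ((a i : ℤ) - f i) ^ 2 + ((c i : ℤ) - f i) ^ 2 + ((e i : ℤ) - f i) ^ 2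
        = (a i : ℤ) ^ 2 + (c i : ℤ) ^ 2 + (e i : ℤ) ^ 2 - 3 * (f i : ℤ) ^ 2 := fun i => by
      have : (a i : ℤ) + c i + e i = 3 * f i := by exact_mod_cast congrFun h i
      linear_combination (-2 * (f i : ℤ)) * this
    simp only [hi, sum_sub_distrib, sum_add_distrib, ← mul_sum, hsq a ha, hsq c hc, hsq e he,
      hsq f hf]
    ring
  have hterm := (sum_eq_zero_iff_of_nonneg fun i _ => by positivity).1 hzero
  refine ⟨funext fun i => ?_, funext fun i => ?_, funext fun i => ?_⟩ <;>
  · have := hterm i (mem_univ i)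
    zify
    nlinarith [sq_nonneg ((a i : ℤ) - f i), sq_nonneg ((c i : ℤ) - f i),
      sq_nonneg ((e i : ℤ) - f i)]

theorem onlyTrivialSolutions_image_sphere (n d k : ℕ) :
    OnlyTrivialSolutions 0 (-1) 3 (-1) (-1) ((sphere n d k).image (map (3 * d))) := by
  simp only [OnlyTrivialSolutions, mem_image, Nat.cast_zero, zero_dvd_iff]
  rintro _ ⟨a, ha, rfl⟩ _ ⟨f, hf, rfl⟩ _ ⟨c, hc, rfl⟩ _ ⟨e, he, rfl⟩ h
  have hlt : ∀ v ∈ sphere n d k, ∀ i, v i < d := fun v hv => mem_box.1 (sphere_subset_box hv)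
  -- no carries: all digits of `a + c + e` and `3 • f` are below the base `3 * d`
  have hvec : a + c + e = 3 • f := by
    refine map_injOn (d := 3 * d) (fun i => ?_) (fun i => ?_) ?_
    · have := hlt a ha i; have := hlt c hc i; have := hlt e he i
      simp only [Pi.add_apply]; omega
    · have := hlt f hf i
      simp only [Pi.smul_apply, smul_eq_mul]; omega
    · simp only [map_add, map_nsmul, smul_eq_mul]
      omega
  obtain ⟨rfl, rfl, rfl⟩ := eq_of_mem_sphere_of_add_add_eq ha hf hc he hvec
  simp

theorem exists_large_onlyTrivialSolutions (n d : ℕ) :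
    ∃ T : Finset ℕ, (∀ t ∈ T, t < (3 * d) ^ n) ∧ OnlyTrivialSolutions 0 (-1) 3 (-1) (-1) T ∧
      ((d ^ n : ℕ) : ℝ) / ((n * d ^ 2 : ℕ) : ℝ) ≤ #T := by
  obtain ⟨k, hk⟩ := exists_large_sphere n d
  have hlt : ∀ a ∈ sphere n d k, ∀ i, a i < 3 * d := fun a ha i => by
    have := mem_box.1 (sphere_subset_box ha) i; omega
  refine ⟨(sphere n d k).image (map (3 * d)), ?_, onlyTrivialSolutions_image_sphere n d k, ?_⟩
  · simp only [mem_image]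
    rintro _ ⟨a, ha, rfl⟩
    exact map_lt_pow (hlt a ha)
  · rwa [card_image_of_injOn (map_injOn.mono hlt)]

end Behrend

/-- The numbers with `k` base-`q` digits, all in `T` (`Behrend.map q a = ∑ i, a i * q ^ i`). -/
def digitSet (q k : ℕ) (T : Finset ℕ) : Finset ℕ :=
  (Fintype.piFinset fun _ : Fin k => T).image (Behrend.map q)

section digitSet

variable {q k : ℕ} {T : Finset ℕ}

theorem digitSet_subset_range (hT : ∀ t ∈ T, t < q) : digitSet q k T ⊆ range (q ^ k) := by
  simp only [digitSet, subset_iff, mem_image, Fintype.mem_piFinset, mem_range]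
  rintro _ ⟨a, ha, rfl⟩
  exact Behrend.map_lt_pow fun i => hT _ (ha i)

theorem card_digitSet (hT : ∀ t ∈ T, t < q) : #(digitSet q k T) = #T ^ k := by
  rw [digitSet, card_image_of_injOn, Fintype.card_piFinset, prod_const, card_univ,
    Fintype.card_fin]
  exact Behrend.map_injOn.mono fun a ha i => hT _ (Fintype.mem_piFinset.1 ha i)

theorem exists_eq_add_mul_of_mem_digitSet_succ {x : ℕ} (hx : x ∈ digitSet q (k + 1) T) :
    ∃ t ∈ T, ∃ m ∈ digitSet q k T, x = t + m * q := by
  simp only [digitSet, mem_image, Fintype.mem_piFinset] at hx ⊢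
  obtain ⟨a, ha, rfl⟩ := hx
  exact ⟨a 0, ha 0, _, ⟨a ∘ Fin.succ, fun i => ha i.succ, rfl⟩, Behrend.map_succ' a⟩

end digitSet

namespace OnlyTrivialSolutions

variable {q : ℕ} {A B C D : ℤ} {T : Finset ℕ}

theorem digitSet (hq : q ≠ 0) (hsum : A + B + C + D = 0) (hT : OnlyTrivialSolutions q A B C D T)
    (k : ℕ) : OnlyTrivialSolutions 0 A B C D (digitSet q k T) := by
  induction k with
  | zero =>
    intro w hw x hx y hy z hz _
    simp only [_root_.digitSet, mem_image] at hw hx hy hz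
    obtain ⟨_, -, rfl⟩ := hw; obtain ⟨_, -, rfl⟩ := hx
    obtain ⟨_, -, rfl⟩ := hy; obtain ⟨_, -, rfl⟩ := hz
    simp
  | succ k ih =>
    intro w hw x hx y hy z hz h
    obtain ⟨w₀, hw₀, w₁, hw₁, rfl⟩ := exists_eq_add_mul_of_mem_digitSet_succ hw
    obtain ⟨x₀, hx₀, x₁, hx₁, rfl⟩ := exists_eq_add_mul_of_mem_digitSet_succ hx
    obtain ⟨y₀, hy₀, y₁, hy₁, rfl⟩ := exists_eq_add_mul_of_mem_digitSet_succ hy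
    obtain ⟨z₀, hz₀, z₁, hz₁, rfl⟩ := exists_eq_add_mul_of_mem_digitSet_succ hz
    have hsplit : A * ↑(w₀ + w₁ * q) + B * ↑(x₀ + x₁ * q) + C * ↑(y₀ + y₁ * q) + D * ↑(z₀ + z₁ * q)
        = (A * w₀ + B * x₀ + C * y₀ + D * z₀) + q * (A * w₁ + B * x₁ + C * y₁ + D * z₁) := by
      push_cast; ring
    rw [Nat.cast_zero, zero_dvd_iff, hsplit] at h
    obtain ⟨rfl, rfl, rfl⟩ :=
      hT _ hw₀ _ hx₀ _ hy₀ _ hz₀ ⟨-(A * w₁ + B * x₁ + C * y₁ + D * z₁), by linarith⟩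
    have hhigh : (q : ℤ) * (A * w₁ + B * x₁ + C * y₁ + D * z₁) = 0 := by
      linear_combination h - (w₀ : ℤ) * hsum
    obtain ⟨rfl, rfl, rfl⟩ := ih _ hw₁ _ hx₁ _ hy₁ _ hz₁ <| by
      simpa [hq] using hhigh
    simp

theorem of_modEq {N : ℕ} {A' B' C' D' : ℤ} (h : OnlyTrivialSolutions 0 A' B' C' D' T)
    (hA : A ≡ A' [ZMOD q]) (hB : B ≡ B' [ZMOD q]) (hC : C ≡ C' [ZMOD q]) (hD : D ≡ D' [ZMOD q])
    (hT : ∀ t ∈ T, t ≤ N) (hN : (|A'| + |B'| + |C'| + |D'|) * N < q) :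
    OnlyTrivialSolutions q A B C D T := by
  intro w hw x hx y hy z hz hdvd
  have hmod : A * w + B * x + C * y + D * z ≡ A' * w + B' * x + C' * y + D' * z [ZMOD q] :=
    (((hA.mul_right _).add (hB.mul_right _)).add (hC.mul_right _)).add (hD.mul_right _)
  have hsmall : ∀ c : ℤ, ∀ t ∈ T, |c * t| ≤ |c| * N := fun c t ht => by
    rw [abs_mul, Nat.abs_cast]
    exact mul_le_mul_of_nonneg_left (by exact_mod_cast hT t ht) (abs_nonneg c)
  have hw' := abs_le.1 (hsmall A' w hw); have hx' := abs_le.1 (hsmall B' x hx)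
  have hy' := abs_le.1 (hsmall C' y hy); have hz' := abs_le.1 (hsmall D' z hz)
  refine h w hw x hx y hy z hz (zero_dvd_iff.2 (Int.eq_zero_of_abs_lt_dvd (m := q) ?_ ?_))
  · simpa using dvd_add hdvd (Int.modEq_iff_dvd.1 hmod)
  · exact abs_lt.2 ⟨by linarith, by linarith⟩

end OnlyTrivialSolutions

theorem six_mul_three_mul_pow_lt {s D : ℝ} {n : ℕ} (hs : 3 ≤ s) (hD₀ : 0 ≤ D)
    (hD : D ≤ exp (s - 4)) (hn : (n : ℝ) < s + 1) : 6 * (3 * D) ^ n < exp (s ^ 2) := by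
  have h3D : 3 * D ≤ exp (s - 2) :=
    calc 3 * D ≤ exp 2 * exp (s - 4) :=
          mul_le_mul (by linarith [add_one_le_exp 2]) hD hD₀ (exp_pos _).le
      _ = exp (s - 2) := by rw [← exp_add]; ring_nf
  have hexp : (n : ℝ) * (s - 2) < (s + 1) * (s - 2) := mul_lt_mul_of_pos_right hn (by linarith)
  calc 6 * (3 * D) ^ n ≤ 6 * exp (s - 2) ^ n := by gcongr
    _ = 6 * exp (n * (s - 2)) := by rw [exp_nat_mul]
    _ < exp (s + 2) * exp ((s + 1) * (s - 2)) :=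
        mul_lt_mul' (by linarith [add_one_le_exp (s + 2)]) (exp_lt_exp.2 hexp) (exp_pos _).le
          (exp_pos _)
    _ = exp (s ^ 2) := by rw [← exp_add]; ring_nf

theorem exp_mul_lt_pow {s D : ℝ} {n : ℕ} (hs : 5 ≤ s) (hD : exp (s - 5) ≤ D) (hn : s ≤ n)
    (hn' : (n : ℝ) < s + 1) : exp (s ^ 2 - 8 * s) * (n * D ^ 2) < D ^ n := by
  have hn2 : 2 ≤ n := by exact_mod_cast (by linarith : (2 : ℝ) ≤ n)
  have hD₀ : 0 < D := (exp_pos _).trans_le hD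
  have hlow : exp (s ^ 2 - 7 * s + 10) ≤ D ^ (n - 2) :=
    calc exp (s ^ 2 - 7 * s + 10) ≤ exp ((n - 2 : ℕ) * (s - 5)) := by
          rw [exp_le_exp, Nat.cast_sub hn2]; push_cast; nlinarith
      _ = exp (s - 5) ^ (n - 2) := exp_nat_mul _ _
      _ ≤ D ^ (n - 2) := by gcongr
  calc exp (s ^ 2 - 8 * s) * (n * D ^ 2) < exp (s ^ 2 - 8 * s) * (exp s * D ^ 2) := by
        gcongr; linarith [add_one_le_exp s]
    _ = exp (s ^ 2 - 7 * s) * D ^ 2 := by rw [← mul_assoc, ← exp_add]; ring_nf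
    _ ≤ D ^ (n - 2) * D ^ 2 := by gcongr; exact (exp_le_exp.2 (by linarith)).trans hlow
    _ = D ^ n := by rw [← pow_add, Nat.sub_add_cancel hn2]

theorem exp_sub_five_le_floor_exp_sub_four {s : ℝ} (hs : 5 ≤ s) :
    exp (s - 5) ≤ ⌊exp (s - 4)⌋₊ := by
  have h : exp (s - 4) = exp (s - 5) * exp 1 := by rw [← exp_add]; ring_nf
  have := Nat.sub_one_lt_floor (exp (s - 4))
  nlinarith [add_one_le_exp 1, one_le_exp (by linarith : 0 ≤ s - 5)]

theorem exists_pow_le_and_rpow_le_pow {q τ : ℕ} (hq : 1 < q) {θ : ℝ} (hτ : (q : ℝ) ^ θ < τ) :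
    ∃ L₀ : ℕ, ∀ L ≥ L₀, ∃ k, q ^ k ≤ L ∧ (L : ℝ) ^ θ ≤ τ ^ k := by
  have hr : 0 < (q : ℝ) ^ θ := rpow_pos_of_pos (by positivity) θ
  obtain ⟨K, hK⟩ : ∃ K, ∀ k ≥ K, (q : ℝ) ^ θ * ((q : ℝ) ^ θ) ^ k ≤ (τ : ℝ) ^ k := by
    have := tendsto_pow_atTop_atTop_of_one_lt ((one_lt_div hr).2 hτ)
    obtain ⟨K, hK⟩ := Filter.eventually_atTop.1 (this.eventually_ge_atTop ((q : ℝ) ^ θ))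
    refine ⟨K, fun k hk => ?_⟩
    simpa only [div_pow, le_div_iff₀ (pow_pos hr k)] using hK k hk
  refine ⟨q ^ K, fun L hL => ⟨Nat.log q L, Nat.pow_log_le_self q ?_, ?_⟩⟩
  · exact ((Nat.pow_pos (by omega)).trans_le hL).ne'
  have hL₁ : (1 : ℝ) ≤ L := by exact_mod_cast (Nat.one_le_pow _ _ (by omega)).trans hL
  rcases le_or_gt θ 0 with hθ | hθ
  · have hτ₁ : (1 : ℝ) ≤ τ := by
      exact_mod_cast Nat.one_le_iff_ne_zero.2 (by rintro rfl; simp at hτ; linarith)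
    exact (rpow_le_one_of_one_le_of_nonpos hL₁ hθ).trans (one_le_pow₀ hτ₁)
  calc (L : ℝ) ^ θ ≤ ((q : ℝ) ^ (Nat.log q L + 1)) ^ θ :=
        rpow_le_rpow (by positivity) (by exact_mod_cast (Nat.lt_pow_succ_log_self hq L).le) hθ.le
    _ = (q : ℝ) ^ θ * ((q : ℝ) ^ θ) ^ Nat.log q L := by
        rw [← rpow_pow_comm (by positivity), pow_succ']
    _ ≤ τ ^ Nat.log q L := hK _ (Nat.le_log_of_pow_le hq hL)

theorem exists_onlyTrivialSolutions_rpow_lt_card {q : ℕ} (hq : 1 < q) :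
    ∃ N : ℕ, ∃ T : Finset ℕ, (∀ t ∈ T, t ≤ N) ∧ 6 * N < q ∧
      OnlyTrivialSolutions 0 (-1) 3 (-1) (-1) T ∧ (q : ℝ) ^ (1 - 8 / √(log q)) < #T := by
  set s := √(log q)
  have hlog : 0 < log q := log_pos (by exact_mod_cast hq)
  have hs : 0 < s := sqrt_pos.2 hlog
  have hqs : (q : ℝ) = exp (s ^ 2) := by rw [sq_sqrt hlog.le, exp_log (by positivity)]
  rcases lt_or_ge s 8 with hs8 | hs8
  · refine ⟨0, {0}, by simp, by omega, by simp [OnlyTrivialSolutions], ?_⟩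
    rw [card_singleton, Nat.cast_one]
    exact rpow_lt_one_of_one_lt_of_neg (by exact_mod_cast hq) (by rwa [sub_neg, one_lt_div hs])
  -- Behrend's parameters: `n ≈ √(log q)` coordinates, each below `d ≈ q ^ (1 / n) / e⁴`
  set n := ⌈s⌉₊
  set d := ⌊exp (s - 4)⌋₊
  have hn : (n : ℝ) < s + 1 := Nat.ceil_lt_add_one hs.le
  obtain ⟨T, hTlt, hT, hcard⟩ := Behrend.exists_large_onlyTrivialSolutions n d
  refine ⟨(3 * d) ^ n, T, fun t ht => (hTlt t ht).le, ?_, hT, ?_⟩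
  · have := six_mul_three_mul_pow_lt (by linarith) d.cast_nonneg (Nat.floor_le (exp_pos _).le) hn
    rw [← hqs] at this
    exact_mod_cast this
  · have hd := exp_sub_five_le_floor_exp_sub_four (by linarith : 5 ≤ s)
    have hexp : (q : ℝ) ^ (1 - 8 / s) = exp (s ^ 2 - 8 * s) := by
      rw [hqs, ← exp_mul]; congr 1; field_simp
    refine hexp ▸ lt_of_lt_of_le ?_ hcard
    push_cast
    have hd₀ : (0 : ℝ) < d := (exp_pos _).trans_le hd
    have hn₀ : (0 : ℝ) < n := hs.trans_le (Nat.le_ceil s)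
    rw [lt_div_iff₀ (by positivity)]
    exact exp_mul_lt_pow (by linarith) hd (Nat.le_ceil s) hn

theorem P1_add_P2_add_P3_add_P4 (x y z : ℤ) : P1 x y z + P2 x y z + P3 x y z + P4 x y z = 0 := by
  simp only [P1, P2, P3, P4]; ring

theorem stmt15 :
    ∃ c : ℝ, 0 < c ∧
      ∀ p : ℕ, p.Prime → 3 < p →
        ∀ a1 a2 a3 : ℤ,
          P1 a1 a2 a3 ≡ -1 [ZMOD (p : ℤ)] →
          P2 a1 a2 a3 ≡ 3 [ZMOD (p : ℤ)] →
          P3 a1 a2 a3 ≡ -1 [ZMOD (p : ℤ)] →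
          P4 a1 a2 a3 ≡ -1 [ZMOD (p : ℤ)] →
          ∃ L0 : ℕ, ∀ L : ℕ, L0 ≤ L →
            ∃ Λ : Finset ℕ, Λ ⊆ Finset.range L ∧
              (L : ℝ) ^ ((1 : ℝ) - c / Real.sqrt (Real.log p)) ≤ Λ.card ∧
              ∀ w ∈ Λ, ∀ x ∈ Λ, ∀ y ∈ Λ, ∀ z ∈ Λ,
                P1 a1 a2 a3 * (w : ℤ) + P2 a1 a2 a3 * (x : ℤ) +
                  P3 a1 a2 a3 * (y : ℤ) + P4 a1 a2 a3 * (z : ℤ) = 0 →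
                w = x ∧ x = y ∧ y = z := by
  refine ⟨8, by norm_num, fun p hp _ a1 a2 a3 h1 h2 h3 h4 => ?_⟩
  obtain ⟨N, T, hTN, hNp, hT₀, hTcard⟩ := exists_onlyTrivialSolutions_rpow_lt_card hp.one_lt
  have hT : OnlyTrivialSolutions p (P1 a1 a2 a3) (P2 a1 a2 a3) (P3 a1 a2 a3) (P4 a1 a2 a3) T :=
    hT₀.of_modEq h1 h2 h3 h4 hTN (by norm_num; exact_mod_cast hNp)
  have hTp : ∀ t ∈ T, t < p := fun t ht => by have := hTN t ht; omega
  have hΛ := hT.digitSet hp.ne_zero (P1_add_P2_add_P3_add_P4 a1 a2 a3)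
  obtain ⟨L₀, hL₀⟩ := exists_pow_le_and_rpow_le_pow hp.one_lt hTcard
  refine ⟨L₀, fun L hL => ?_⟩
  obtain ⟨k, hkL, hk⟩ := hL₀ L hL
  refine ⟨digitSet p k T, (digitSet_subset_range hTp).trans (range_subset_range.2 hkL), ?_,
    fun w hw x hx y hy z hz h => hΛ k w hw x hx y hy z hz (by simpa using h)⟩
  rwa [card_digitSet hTp, Nat.cast_pow]
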